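/- Consider the restless-bandit LP with a dynamic population, i.e. λ_k > 0 for every class k. Assume the set of optimal solutions of (LP) is nonempty and bounded, and assume that either p_k(j) > 0 for all j,k, or C_k(j,0) > 0 for all j,k. Then (LP) admits an optimal solution x* = (x*^a_{j,k}) with the property that x*^0_{j,k} · x*^1_{j,k} > 0 for at most one pair (j,k); that is, with the possible exception of a single state–class pair, every pair (j,k) has x*^0_{j,k} = 0 or x*^1_{j,k} = 0. -/

import Mathlib

open Finset

/-- Feasibility for the restless-bandit LP. -/
def LPFeasible {K : ℕ} {J : Fin K → ℕ} (lam : Fin K → ℝ)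
    (p : (k : Fin K) → Fin (J k) → ℝ)
    (q : (k : Fin K) → Fin (J k) → Fin (J k) → Fin 2 → ℝ)
    (α : ℝ) (xinit : Fin K → ℝ)
    (x : (k : Fin K) → Fin (J k) → Fin 2 → ℝ) : Prop :=
  (∀ k j, 0 = lam k * p k j + ∑ a : Fin 2, ∑ i, x k i a * q k j i a) ∧
  (∑ k, ∑ j, x k j 1 ≤ α) ∧
  (∀ k, lam k = 0 → ∑ j, ∑ a : Fin 2, x k j a = xinit k) ∧
  (∀ k j a, 0 ≤ x k j a)

/-- The objective of the restless-bandit LP. -/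
def LPCost {K : ℕ} {J : Fin K → ℕ}
    (C : (k : Fin K) → Fin (J k) → Fin 2 → ℝ)
    (x : (k : Fin K) → Fin (J k) → Fin 2 → ℝ) : ℝ :=
  ∑ k, ∑ j, ∑ a : Fin 2, C k j a * x k j a

open Topology Matrix

/-!
The optimal set is closed and bounded, so by Krein–Milman it has an extreme point `x`.
Suppose two states used both actions at `x`. With `A_a` the set of states using action `a`, the
support of `x` has `|A₀| + |A₁| = |A₀ ∪ A₁| + |A₀ ∩ A₁| ≥ |A₀ ∪ A₁| + 2` coordinates, whereas only
`|A₀ ∪ A₁| + 1` equations constrain it: the balance equations of occupied states and the capacity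
sum. Indeed, since the source `λ p` and the off-diagonal rates are nonnegative, the balance equation
of an empty state forces all flow into it from the support to vanish. So some nonzero direction
`d`, supported on the support of `x`, leaves all constraints unchanged, and `x ± ε d` is feasible
for small `ε > 0`. Optimality of `x` makes `d` cost-neutral, so `x ± ε d` are optimal and `x` is
not extreme.
-/

theorem eq_zero_of_add_mem_of_sub_mem_of_mem_extremePoints {𝕜 E : Type*} [Field 𝕜] [LinearOrder 𝕜]
    [IsStrictOrderedRing 𝕜] [AddCommGroup E] [Module 𝕜 E] {A : Set E} {x y : E}
    (hx : x ∈ A.extremePoints 𝕜) (hadd : x + y ∈ A) (hsub : x - y ∈ A) : y = 0 := by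
  have : Invertible (2 : 𝕜) := invertibleOfNonzero two_ne_zero
  simpa using hx.2 hadd hsub (mem_openSegment_add_sub x y)

theorem Matrix.exists_mulVec_eq_zero_of_card_lt {m n 𝕜 : Type*} [Fintype m] [Fintype n]
    [Field 𝕜] (M : Matrix m n 𝕜) (h : Fintype.card m < Fintype.card n) :
    ∃ v ≠ 0, M *ᵥ v = 0 := by
  have hker : LinearMap.ker M.mulVecLin ≠ ⊥ :=
    LinearMap.ker_ne_bot_of_finrank_lt (by simpa using h)
  obtain ⟨v, hv, hv0⟩ := (Submodule.ne_bot_iff _).mp hker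
  exact ⟨v, hv0, hv⟩

theorem isClosed_setOf_mem_forall_le {X Y : Type*} [TopologicalSpace X] [TopologicalSpace Y]
    [LinearOrder Y] [OrderClosedTopology Y] {F : Set X} {f : X → Y} (hF : IsClosed F)
    (hf : Continuous f) : IsClosed {x | x ∈ F ∧ ∀ y ∈ F, f x ≤ f y} := by
  have : {x | x ∈ F ∧ ∀ y ∈ F, f x ≤ f y} = F ∩ ⋂ y ∈ F, {x | f x ≤ f y} := by
    ext; simp
  rw [this]
  exact hF.inter (isClosed_biInter fun y _ => isClosed_le hf continuous_const)

theorem eventually_abs_mul_le {x d : ℝ} (hx : 0 ≤ x) (hd : d ≠ 0 → 0 < x) :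
    ∀ᶠ ε in 𝓝 0, |ε * d| ≤ x := by
  rcases eq_or_ne d 0 with rfl | hd0
  · simp [hx]
  have : Filter.Tendsto (fun ε : ℝ => |ε * d|) (𝓝 0) (𝓝 0) := by
    simpa using ((continuous_id.mul continuous_const).abs.tendsto (0 : ℝ))
  exact (this.eventually (gt_mem_nhds (hd hd0))).mono fun _ => le_of_lt

section RestlessBandit

variable {K : ℕ} {J : Fin K → ℕ}

def LPOptimal (lam : Fin K → ℝ) (p : (k : Fin K) → Fin (J k) → ℝ)
    (q : (k : Fin K) → Fin (J k) → Fin (J k) → Fin 2 → ℝ) (α : ℝ) (xinit : Fin K → ℝ)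
    (C : (k : Fin K) → Fin (J k) → Fin 2 → ℝ) (x : (k : Fin K) → Fin (J k) → Fin 2 → ℝ) :
    Prop :=
  LPFeasible lam p q α xinit x ∧ ∀ y, LPFeasible lam p q α xinit y → LPCost C x ≤ LPCost C y

def LPNullDirection (q : (k : Fin K) → Fin (J k) → Fin (J k) → Fin 2 → ℝ)
    (d : (k : Fin K) → Fin (J k) → Fin 2 → ℝ) : Prop :=
  (∀ k j, ∑ a : Fin 2, ∑ i, d k i a * q k j i a = 0) ∧ ∑ k, ∑ j, d k j 1 = 0

/-- `q` flattened to a matrix on all (class, state) pairs: `flatRate q r s a` is the rate from `s`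
into `r`. -/
def flatRate (q : (k : Fin K) → Fin (J k) → Fin (J k) → Fin 2 → ℝ)
    (r s : Σ k : Fin K, Fin (J k)) (a : Fin 2) : ℝ :=
  if h : s.1 = r.1 then q r.1 r.2 (Fin.cast (congrArg J h) s.2) a else 0

noncomputable def occupied (x : (k : Fin K) → Fin (J k) → Fin 2 → ℝ) (a : Fin 2) :
    Finset (Σ k : Fin K, Fin (J k)) :=
  univ.filter fun r => 0 < x r.1 r.2 a

/-- The homogeneous equations on a direction supported on the support of `x`: the vanishing of
the coordinates off the support, the balance rows of occupied states (the other rows vanish on the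
support by `flatRate_eq_zero_of_vacant`) and the capacity row. -/
noncomputable def supportConstraints (q : (k : Fin K) → Fin (J k) → Fin (J k) → Fin 2 → ℝ)
    (x : (k : Fin K) → Fin (J k) → Fin 2 → ℝ) :
    Matrix (({r // r ∉ occupied x 0} ⊕ {r // r ∉ occupied x 1}) ⊕
      ({r // r ∈ occupied x 0 ∪ occupied x 1} ⊕ Unit)) ((Σ k : Fin K, Fin (J k)) × Fin 2) ℝ :=
  Matrix.of <| Sum.elim
    (Sum.elim (fun r => Pi.single (r.1, 0) 1) (fun r => Pi.single (r.1, 1) 1))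
    (Sum.elim (fun r v => flatRate q r v.1 v.2) (fun _ v => if v.2 = 1 then 1 else 0))

variable {lam : Fin K → ℝ} {p : (k : Fin K) → Fin (J k) → ℝ}
  {q : (k : Fin K) → Fin (J k) → Fin (J k) → Fin 2 → ℝ} {α : ℝ} {xinit : Fin K → ℝ}
  {C : (k : Fin K) → Fin (J k) → Fin 2 → ℝ} {x d : (k : Fin K) → Fin (J k) → Fin 2 → ℝ}

@[simp]
theorem mem_occupied {r : Σ k : Fin K, Fin (J k)} {a : Fin 2} :
    r ∈ occupied x a ↔ 0 < x r.1 r.2 a := by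
  simp [occupied]

theorem isClosed_setOf_LPFeasible : IsClosed {x | LPFeasible lam p q α xinit x} := by
  simp only [LPFeasible, Set.ofPred_and, Set.ofPred_forall]
  refine ((isClosed_iInter fun k => isClosed_iInter fun j => isClosed_eq ?_ ?_).inter
    ((isClosed_le ?_ ?_).inter ((isClosed_iInter fun k => isClosed_iInter fun _ =>
      isClosed_eq ?_ ?_).inter (isClosed_iInter fun k => isClosed_iInter fun j =>
        isClosed_iInter fun a => isClosed_le ?_ ?_)))) <;> fun_prop

theorem continuous_LPCost : Continuous (LPCost C) := by
  unfold LPCost; fun_prop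

theorem isClosed_setOf_LPOptimal : IsClosed {x | LPOptimal lam p q α xinit C x} :=
  isClosed_setOf_mem_forall_le isClosed_setOf_LPFeasible continuous_LPCost

theorem LPCost_add_smul (c : ℝ) : LPCost C (x + c • d) = LPCost C x + c * LPCost C d := by
  simp only [LPCost, Pi.add_apply, Pi.smul_apply, smul_eq_mul, mul_add, Finset.sum_add_distrib,
    Finset.mul_sum, mul_left_comm c]

theorem LPFeasible.add_smul (hx : LPFeasible lam p q α xinit x) (hlam : ∀ k, lam k ≠ 0)
    (hd : LPNullDirection q d) {c : ℝ} (hc : ∀ k j a, |c * d k j a| ≤ x k j a) :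
    LPFeasible lam p q α xinit (x + c • d) := by
  obtain ⟨hbal, hcap, -, -⟩ := hx
  refine ⟨fun k j => ?_, ?_, fun k hk => absurd hk (hlam k), fun k j a => ?_⟩
  · have := hd.1 k j
    simp only [Pi.add_apply, Pi.smul_apply, smul_eq_mul, add_mul, Finset.sum_add_distrib,
      mul_assoc, ← Finset.mul_sum, this, mul_zero, add_zero]
    exact hbal k j
  · simpa only [Pi.add_apply, Pi.smul_apply, smul_eq_mul, Finset.sum_add_distrib,
      ← Finset.mul_sum, hd.2, mul_zero, add_zero] using hcap
  · have := neg_abs_le (c * d k j a)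
    have := hc k j a
    simp only [Pi.add_apply, Pi.smul_apply, smul_eq_mul]
    linarith

theorem eq_zero_of_LPNullDirection (hx : x ∈ {x | LPOptimal lam p q α xinit C x}.extremePoints ℝ)
    (hlam : ∀ k, lam k ≠ 0) (hd : LPNullDirection q d)
    (hsupp : ∀ k j a, d k j a ≠ 0 → 0 < x k j a) : d = 0 := by
  obtain ⟨hfeas, hopt⟩ := hx.1
  have hsmall : ∀ᶠ ε in 𝓝 0, ∀ k j a, |ε * d k j a| ≤ x k j a :=
    Filter.eventually_all.2 fun k => Filter.eventually_all.2 fun j =>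
      Filter.eventually_all.2 fun a => eventually_abs_mul_le (hfeas.2.2.2 k j a) (hsupp k j a)
  have hpos : ∀ᶠ ε in 𝓝[>] (0 : ℝ), 0 < ε := self_mem_nhdsWithin
  obtain ⟨ε, hεpos, hε⟩ := (hpos.and (nhdsWithin_le_nhds hsmall)).exists
  have hε' : ∀ k j a, |-ε * d k j a| ≤ x k j a := by simpa only [neg_mul, abs_neg] using hε
  have hcost : LPCost C d = 0 := by
    have h₁ := hopt _ (hfeas.add_smul hlam hd hε)
    have h₂ := hopt _ (hfeas.add_smul hlam hd hε')
    rw [LPCost_add_smul] at h₁ h₂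
    nlinarith
  have hmem : ∀ c, (∀ k j a, |c * d k j a| ≤ x k j a) →
      x + c • d ∈ {x | LPOptimal lam p q α xinit C x} := fun c hc =>
    ⟨hfeas.add_smul hlam hd hc, fun y hy => by
      rw [LPCost_add_smul, hcost, mul_zero, add_zero]; exact hopt y hy⟩
  have := eq_zero_of_add_mem_of_sub_mem_of_mem_extremePoints hx (hmem ε hε)
    (by simpa only [neg_smul, ← sub_eq_add_neg] using hmem (-ε) hε')
  exact (smul_eq_zero.mp this).resolve_left hεpos.ne'

theorem flatRate_nonneg (hq : ∀ k (j i : Fin (J k)) (a : Fin 2), j ≠ i → 0 ≤ q k j i a)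
    {r s : Σ k : Fin K, Fin (J k)} (hsr : s ≠ r) (a : Fin 2) : 0 ≤ flatRate q r s a := by
  obtain ⟨k, j⟩ := r
  obtain ⟨k', i⟩ := s
  unfold flatRate
  split_ifs with h
  · dsimp only at h
    subst h
    exact hq _ _ _ _ fun hji => hsr (by simp_all)
  · exact le_rfl

theorem sum_mul_flatRate (q : (k : Fin K) → Fin (J k) → Fin (J k) → Fin 2 → ℝ)
    (y : (k : Fin K) → Fin (J k) → Fin 2 → ℝ) (r : Σ k : Fin K, Fin (J k)) :
    ∑ v : (Σ k : Fin K, Fin (J k)) × Fin 2, y v.1.1 v.1.2 v.2 * flatRate q r v.1 v.2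
      = ∑ a : Fin 2, ∑ i, y r.1 i a * q r.1 r.2 i a := by
  rw [Fintype.sum_prod_type, Finset.sum_comm]
  refine Finset.sum_congr rfl fun a _ => ?_
  rw [← Finset.univ_sigma_univ, Finset.sum_sigma, Finset.sum_eq_single r.1]
  · simp [flatRate]
  · intro k _ hk
    exact Finset.sum_eq_zero fun i _ => by simp [flatRate, hk]
  · simp

theorem flatRate_eq_zero_of_vacant (hq : ∀ k (j i : Fin (J k)) (a : Fin 2), j ≠ i → 0 ≤ q k j i a)
    (hx : ∀ k j a, 0 ≤ x k j a) {r : Σ k : Fin K, Fin (J k)} {b : ℝ} (hb : 0 ≤ b)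
    (hbal : 0 = b + ∑ a : Fin 2, ∑ i, x r.1 i a * q r.1 r.2 i a) (hr : ∀ a, x r.1 r.2 a = 0)
    {v : (Σ k : Fin K, Fin (J k)) × Fin 2} (hv : 0 < x v.1.1 v.1.2 v.2) :
    flatRate q r v.1 v.2 = 0 := by
  rw [← sum_mul_flatRate] at hbal
  have hterm : ∀ w : (Σ k : Fin K, Fin (J k)) × Fin 2,
      0 ≤ x w.1.1 w.1.2 w.2 * flatRate q r w.1 w.2 := by
    rintro ⟨s, a⟩
    rcases eq_or_ne s r with rfl | hsr
    · simp [hr]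
    · exact mul_nonneg (hx _ _ _) (flatRate_nonneg hq hsr a)
  -- all terms are nonnegative, yet they sum to `-b ≤ 0`
  have hsum := le_antisymm (by linarith) (Finset.sum_nonneg fun w _ => hterm w)
  have := (Finset.sum_eq_zero_iff_of_nonneg fun w _ => hterm w).mp hsum v (Finset.mem_univ v)
  exact (mul_eq_zero.mp this).resolve_left hv.ne'

theorem card_supportConstraints_lt (h : 1 < #(occupied x 0 ∩ occupied x 1)) :
    Fintype.card (({r // r ∉ occupied x 0} ⊕ {r // r ∉ occupied x 1}) ⊕
      ({r // r ∈ occupied x 0 ∪ occupied x 1} ⊕ Unit))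
      < Fintype.card ((Σ k : Fin K, Fin (J k)) × Fin 2) := by
  simp only [Fintype.card_sum, Fintype.card_subtype_compl, Fintype.card_coe,
    Fintype.card_prod, Fintype.card_fin, Fintype.card_unit]
  have := card_union_add_card_inter (occupied x 0) (occupied x 1)
  have := card_le_univ (occupied x 0)
  have := card_le_univ (occupied x 1)
  omega

theorem apply_eq_zero_of_mulVec_supportConstraints {g : (Σ k : Fin K, Fin (J k)) × Fin 2 → ℝ}
    (hg : supportConstraints q x *ᵥ g = 0) {v : (Σ k : Fin K, Fin (J k)) × Fin 2}
    (hv : v.1 ∉ occupied x v.2) : g v = 0 := by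
  obtain ⟨r, a⟩ := v
  fin_cases a
  · simpa [supportConstraints, mulVec, dotProduct, Pi.single_apply]
      using congrFun hg (.inl (.inl ⟨r, hv⟩))
  · simpa [supportConstraints, mulVec, dotProduct, Pi.single_apply]
      using congrFun hg (.inl (.inr ⟨r, hv⟩))

theorem LPNullDirection_of_mulVec_supportConstraints
    (hq : ∀ k (j i : Fin (J k)) (a : Fin 2), j ≠ i → 0 ≤ q k j i a)
    (hx : LPFeasible lam p q α xinit x) (hsrc : ∀ k j, 0 ≤ lam k * p k j)
    {g : (Σ k : Fin K, Fin (J k)) × Fin 2 → ℝ} (hg : supportConstraints q x *ᵥ g = 0) :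
    LPNullDirection q fun k j a => g (⟨k, j⟩, a) := by
  have hnn := hx.2.2.2
  refine ⟨fun k j => (sum_mul_flatRate q (fun k j a => g (⟨k, j⟩, a)) ⟨k, j⟩).symm.trans ?_, ?_⟩
  · by_cases hr : (⟨k, j⟩ : Σ k : Fin K, Fin (J k)) ∈ occupied x 0 ∪ occupied x 1
    · simpa [supportConstraints, mulVec, dotProduct, mul_comm]
        using congrFun hg (.inr (.inl ⟨_, hr⟩))
    have hvacant : ∀ a, x k j a = 0 := by
      simp only [Finset.mem_union, mem_occupied, not_or, not_lt] at hr
      intro a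
      fin_cases a
      exacts [le_antisymm hr.1 (hnn k j 0), le_antisymm hr.2 (hnn k j 1)]
    refine Finset.sum_eq_zero fun v _ => ?_
    by_cases hv : v.1 ∈ occupied x v.2
    · rw [flatRate_eq_zero_of_vacant hq hnn (hsrc k j) (hx.1 k j) hvacant (mem_occupied.mp hv),
        mul_zero]
    · rw [apply_eq_zero_of_mulVec_supportConstraints hg hv, zero_mul]
  · have := congrFun hg (.inr (.inr ()))
    simp only [supportConstraints, mulVec, dotProduct, Matrix.of_apply, Sum.elim_inr, ite_mul,
      one_mul, zero_mul, Fintype.sum_prod_type, Fin.sum_univ_two, Pi.zero_apply] at this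
    simpa [← Finset.univ_sigma_univ, Finset.sum_sigma] using this

theorem exists_LPNullDirection_of_one_lt_card
    (hq : ∀ k (j i : Fin (J k)) (a : Fin 2), j ≠ i → 0 ≤ q k j i a)
    (hx : LPFeasible lam p q α xinit x) (hsrc : ∀ k j, 0 ≤ lam k * p k j)
    (h : 1 < #(occupied x 0 ∩ occupied x 1)) :
    ∃ d ≠ 0, LPNullDirection q d ∧ ∀ k j a, d k j a ≠ 0 → 0 < x k j a := by
  obtain ⟨g, hg0, hg⟩ :=
    (supportConstraints q x).exists_mulVec_eq_zero_of_card_lt (card_supportConstraints_lt h)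
  refine ⟨fun k j a => g (⟨k, j⟩, a), fun hd => hg0 ?_,
    LPNullDirection_of_mulVec_supportConstraints hq hx hsrc hg, fun k j a hd => ?_⟩
  · funext v
    exact congrFun (congrFun (congrFun hd v.1.1) v.1.2) v.2
  · by_contra hxkja
    exact hd (apply_eq_zero_of_mulVec_supportConstraints hg (by simpa using hxkja))

theorem card_occupied_inter_le_one_of_mem_extremePoints (hlam : ∀ k, 0 < lam k)
    (hp : ∀ k j, 0 ≤ p k j) (hq : ∀ k (j i : Fin (J k)) (a : Fin 2), j ≠ i → 0 ≤ q k j i a)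
    (hx : x ∈ {x | LPOptimal lam p q α xinit C x}.extremePoints ℝ) :
    #(occupied x 0 ∩ occupied x 1) ≤ 1 := by
  by_contra! h
  obtain ⟨d, hd0, hd, hsupp⟩ := exists_LPNullDirection_of_one_lt_card hq hx.1.1
    (fun k j => mul_nonneg (hlam k).le (hp k j)) h
  exact hd0 (eq_zero_of_LPNullDirection hx (fun k => (hlam k).ne') hd hsupp)

end RestlessBandit

theorem lp_dynamic_population_exists_optimal_almost_nondegenerate_general
    {K : ℕ} {J : Fin K → ℕ}
    (lam : Fin K → ℝ) (hdyn : ∀ k, 0 < lam k)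
    (p : (k : Fin K) → Fin (J k) → ℝ)
    (hp : ∀ k j, 0 ≤ p k j)
    (q : (k : Fin K) → Fin (J k) → Fin (J k) → Fin 2 → ℝ)
    (hq : ∀ k (j i : Fin (J k)) (a : Fin 2), j ≠ i → 0 ≤ q k j i a)
    (C : (k : Fin K) → Fin (J k) → Fin 2 → ℝ)
    (α : ℝ)
    (xinit : Fin K → ℝ)
    (hOptNe : {x | LPFeasible lam p q α xinit x ∧
        ∀ y, LPFeasible lam p q α xinit y → LPCost C x ≤ LPCost C y}.Nonempty)
    (hOptBdd : Bornology.IsBounded {x | LPFeasible lam p q α xinit x ∧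
        ∀ y, LPFeasible lam p q α xinit y → LPCost C x ≤ LPCost C y}) :
    ∃ xstar, LPFeasible lam p q α xinit xstar ∧
      (∀ y, LPFeasible lam p q α xinit y → LPCost C xstar ≤ LPCost C y) ∧
      (∀ s t : Σ k : Fin K, Fin (J k),
        0 < xstar s.1 s.2 0 * xstar s.1 s.2 1 →
        0 < xstar t.1 t.2 0 * xstar t.1 t.2 1 → s = t) := by
  have hcompact : IsCompact {x | LPOptimal lam p q α xinit C x} :=
    Metric.isCompact_of_isClosed_isBounded isClosed_setOf_LPOptimal hOptBdd
  obtain ⟨x, hx⟩ := hcompact.extremePoints_nonempty hOptNe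
  have hnn := hx.1.1.2.2.2
  have hmixed : ∀ r : Σ k : Fin K, Fin (J k),
      0 < x r.1 r.2 0 * x r.1 r.2 1 → r ∈ occupied x 0 ∩ occupied x 1 := fun r hr => by
    simp [pos_of_mul_pos_left hr (hnn _ _ 1), pos_of_mul_pos_right hr (hnn _ _ 0)]
  refine ⟨x, hx.1.1, hx.1.2, fun s t hs ht => ?_⟩
  exact Finset.card_le_one.mp (card_occupied_inter_le_one_of_mem_extremePoints hdyn hp hq hx)
    s (hmixed s hs) t (hmixed t ht)

/-- For a dynamic population (`λ_k > 0` for all `k`), if the set of optimal solutions of (LP) is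
nonempty and bounded, and either `p_k(j) > 0` for all `j,k` or `C_k(j,0) > 0` for all `j,k`,
then (LP) admits an optimal solution `x*` such that `x*⁰_{j,k} · x*¹_{j,k} > 0` for at most one
pair `(j,k)`. -/
theorem lp_dynamic_population_exists_optimal_almost_nondegenerate
    {K : ℕ} (hK : 1 ≤ K) {J : Fin K → ℕ} (hJ : ∀ k, 1 ≤ J k)
    (lam : Fin K → ℝ) (hdyn : ∀ k, 0 < lam k)
    (p : (k : Fin K) → Fin (J k) → ℝ)
    (hp : ∀ k j, 0 ≤ p k j) (hpsum : ∀ k, ∑ j, p k j = 1)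
    (q : (k : Fin K) → Fin (J k) → Fin (J k) → Fin 2 → ℝ)
    (q0 : (k : Fin K) → Fin (J k) → Fin 2 → ℝ)
    (hq : ∀ k (j i : Fin (J k)) (a : Fin 2), j ≠ i → 0 ≤ q k j i a)
    (hq0 : ∀ k (i : Fin (J k)) (a : Fin 2), 0 ≤ q0 k i a)
    (hdiag : ∀ k (j : Fin (J k)) (a : Fin 2),
      q k j j a = -(q0 k j a + ∑ i ∈ univ.filter (fun i => i ≠ j), q k i j a))
    (C : (k : Fin K) → Fin (J k) → Fin 2 → ℝ)
    (α : ℝ) (hα : 0 < α)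
    (xinit : Fin K → ℝ) (hxinit : ∀ k, 0 ≤ xinit k)
    (hOptNe : {x | LPFeasible lam p q α xinit x ∧
        ∀ y, LPFeasible lam p q α xinit y → LPCost C x ≤ LPCost C y}.Nonempty)
    (hOptBdd : Bornology.IsBounded {x | LPFeasible lam p q α xinit x ∧
        ∀ y, LPFeasible lam p q α xinit y → LPCost C x ≤ LPCost C y})
    (hpos : (∀ k j, 0 < p k j) ∨ (∀ k (j : Fin (J k)), 0 < C k j 0)) :
    ∃ xstar, LPFeasible lam p q α xinit xstar ∧
      (∀ y, LPFeasible lam p q α xinit y → LPCost C xstar ≤ LPCost C y) ∧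
      (∀ s t : Σ k : Fin K, Fin (J k),
        0 < xstar s.1 s.2 0 * xstar s.1 s.2 1 →
        0 < xstar t.1 t.2 0 * xstar t.1 t.2 1 → s = t) :=
  lp_dynamic_population_exists_optimal_almost_nondegenerate_general lam hdyn p hp q hq C α xinit
    hOptNe hOptBdd
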